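/- arXiv:1810.04565 — 7 statements merged into one kernel-verified Lean document; each statement's English description precedes it below -/
import Mathlib

section
/- Let h : ℕ → ℝ satisfy h(2) = 2 and, for every integer m ≥ 3, h(m) = 1 + (1 − m·(1/2)^{m−1})·h(m) + (m−1)·(1/2)^{m−1}·h(m−1). Then for every integer n ≥ 2, h(n) = 2^n / n. -/
/-- Hitting-time equations for the Markov chain of `n` players on 2 channels:
if `h 2 = 2` and for every `m ≥ 3`,
`h m = 1 + (1 - m·(1/2)^(m-1))·h m + (m-1)·(1/2)^(m-1)·h (m-1)`,
then `h n = 2^n / n` for every `n ≥ 2`. -/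
theorem stmt_0 (h : ℕ → ℝ) (h2 : h 2 = 2)
    (hrec : ∀ m : ℕ, 3 ≤ m →
      h m = 1 + (1 - (m : ℝ) * (1 / 2) ^ (m - 1)) * h m
        + ((m : ℝ) - 1) * (1 / 2) ^ (m - 1) * h (m - 1)) :
    ∀ n : ℕ, 2 ≤ n → h n = 2 ^ n / n := by
  intro n hn
  induction n, hn using Nat.le_induction with
  | base => norm_num [h2]
  | succ m hm ih =>
    have hrec' := hrec (m + 1) (by omega)
    have ih' := ih
    have hm1 : (m + 1 : ℕ) - 1 = m := by omega
    rw [hm1] at hrec'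
    have hmpos : (0:ℝ) < m := by positivity
    have hm0 : (m:ℝ) ≠ 0 := ne_of_gt hmpos
    have hm10 : (m:ℝ) + 1 ≠ 0 := by positivity
    push_cast at hrec'
    rw [ih'] at hrec'
    -- hrec' : h (m+1) = 1 + (1 - (m+1)*(1/2)^m) * h (m+1) + m * (1/2)^m * (2^m/m)
    have hpow : ((1:ℝ)/2) ^ m * 2 ^ m = 1 := by
      rw [← mul_pow]; norm_num
    have key : ((m:ℝ) + 1) * (1/2)^m * h (m + 1) = 2 := by
      have := hrec'
      field_simp at this ⊢
      nlinarith [this, hpow, sq_nonneg (((1:ℝ)/2)^m)]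
    have hpowne : ((1:ℝ)/2)^m ≠ 0 := by positivity
    have : h (m + 1) = 2 / (((m:ℝ) + 1) * (1/2)^m) := by
      field_simp at key ⊢
      linarith [key]
    rw [this]
    push_cast
    rw [div_eq_div_iff (by positivity) (by positivity)]
    ring_nf
    rw [mul_comm]
    nlinarith [hpow]
end

section
/- In the balls-and-bins model with n ≥ 1 balls, k ≥ 1 bins and parameter z ∈ [0,1], for every set B of bins with |B| = r ≤ n, the probability that every bin in B is a singleton bin equals C(n,r)·r!·(z/k)^r·(1 − r·z/k)^{n−r}. -/
/-- Probability weight of one ball's landing spot: `some j` (bin `j`) has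
probability `z/k`, `none` (not thrown) has probability `1 - z`. -/
noncomputable def ballWeight (k : ℕ) (z : ℝ) : Option (Fin k) → ℝ
  | none => 1 - z
  | some _ => z / k

/-- Probability of an outcome `ω` of throwing the `n` balls independently. -/
noncomputable def outcomeProb (n k : ℕ) (z : ℝ) (ω : Fin n → Option (Fin k)) : ℝ :=
  ∏ i : Fin n, ballWeight k z (ω i)

/-- The set of singleton bins of an outcome: bins containing exactly one ball. -/
def singletonBins {n k : ℕ} (ω : Fin n → Option (Fin k)) : Finset (Fin k) :=
  Finset.univ.filter fun j => (Finset.univ.filter fun i => ω i = some j).card = 1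

/-- In the balls-and-bins model with `n ≥ 1` balls, `k ≥ 1` bins and `z ∈ [0,1]`,
for every set `B` of bins with `|B| = r ≤ n`, the probability that every bin of
`B` is a singleton bin equals `C(n,r)·r!·(z/k)^r·(1 - r·z/k)^(n-r)`. -/
theorem stmt_2 (n k r : ℕ) (z : ℝ) (hn : 1 ≤ n) (hk : 1 ≤ k)
    (hz0 : 0 ≤ z) (hz1 : z ≤ 1) (B : Finset (Fin k)) (hB : B.card = r) (hr : r ≤ n) :
    ∑ ω ∈ Finset.univ.filter (fun ω : Fin n → Option (Fin k) => B ⊆ singletonBins ω),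
        outcomeProb n k z ω
      = (n.choose r : ℝ) * (r.factorial : ℝ) * (z / k) ^ r
        * (1 - r * z / k) ^ (n - r) := by
  classical
  have hrk : r ≤ k := by
    have := B.card_le_univ
    simpa [hB] using this
  have hk0 : (k : ℝ) ≠ 0 := Nat.cast_ne_zero.mpr (by omega)
  set S : ℝ := 1 - r * z / k with hS
  -- rewrite validity
  have hvalid : ∀ ω : Fin n → Option (Fin k), (B ⊆ singletonBins ω) ↔
      ∀ j ∈ B, (Finset.univ.filter fun i => ω i = some j).card = 1 := by
    intro ω
    constructor
    · intro h j hj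
      have := h hj
      simpa [singletonBins] using this
    · intro h j hj
      simp [singletonBins, h j hj]
  -- the per-f family of allowed value sets
  set tset : (↥B ↪ Fin n) → Fin n → Finset (Option (Fin k)) := fun f i =>
    if h : ∃ j : ↥B, f j = i then {some ((h.choose : ↥B) : Fin k)}
    else Finset.univ.filter fun v => ∀ b ∈ B, v ≠ some b with htset
  have tset_range : ∀ (f : ↥B ↪ Fin n) (j : ↥B), tset f (f j) = {some (j : Fin k)} := by
    intro f j
    have h : ∃ j' : ↥B, f j' = f j := ⟨j, rfl⟩
    have hcj : h.choose = j := f.injective h.choose_spec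
    simp only [htset]
    rw [dif_pos h, hcj]
  have tset_out : ∀ (f : ↥B ↪ Fin n) (i : Fin n), (¬ ∃ j : ↥B, f j = i) →
      tset f i = Finset.univ.filter fun v => ∀ b ∈ B, v ≠ some b := by
    intro f i h
    simp only [htset]
    rw [dif_neg h]
  -- for each valid ω, the embedding sending a bin of B to its unique ball
  have exF : ∀ ω : Fin n → Option (Fin k), (B ⊆ singletonBins ω) →
      ∃ f : ↥B ↪ Fin n, ∀ j : ↥B,
        (Finset.univ.filter fun i => ω i = some (j : Fin k)) = {f j} := by
    intro ω hω
    have h1 := (hvalid ω).1 hω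
    have hsing : ∀ j : ↥B, ∃ a, (Finset.univ.filter fun i => ω i = some (j : Fin k)) = {a} :=
      fun j => Finset.card_eq_one.mp (h1 j j.2)
    have hval : ∀ j : ↥B, ω ((hsing j).choose) = some (j : Fin k) := by
      intro j
      have : (hsing j).choose ∈ ({(hsing j).choose} : Finset (Fin n)) := Finset.mem_singleton_self _
      rw [← (hsing j).choose_spec] at this
      simpa using this
    refine ⟨⟨fun j => (hsing j).choose, ?_⟩, fun j => (hsing j).choose_spec⟩
    intro j₁ j₂ hj
    have : some (j₁ : Fin k) = some (j₂ : Fin k) := by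
      rw [← hval j₁, ← hval j₂]
      exact congrArg ω hj
    exact Subtype.ext (Option.some_injective _ this)
  -- the big reindexing
  have key : (∑ ω ∈ Finset.univ.filter (fun ω : Fin n → Option (Fin k) => B ⊆ singletonBins ω),
        outcomeProb n k z ω)
      = ∑ p ∈ (Finset.univ : Finset (↥B ↪ Fin n)).sigma (fun f => Fintype.piFinset (tset f)),
          outcomeProb n k z p.2 := by
    refine Finset.sum_bij'
      (i := fun ω hω => (⟨(exF ω ((Finset.mem_filter.mp hω).2)).choose, ω⟩ :
        Σ _ : ↥B ↪ Fin n, Fin n → Option (Fin k)))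
      (j := fun p _ => p.2) ?_ ?_ ?_ ?_ ?_
    · -- hi : image lands in sigma set
      intro ω hω
      have hω' := (Finset.mem_filter.mp hω).2
      set f := (exF ω hω').choose with hf
      have hfspec := (exF ω hω').choose_spec
      have hfval : ∀ j : ↥B, ω (f j) = some (j : Fin k) := by
        intro j
        have : f j ∈ ({f j} : Finset (Fin n)) := Finset.mem_singleton_self _
        rw [← hfspec j] at this
        simpa using this
      simp only [Finset.mem_sigma, Finset.mem_univ, true_and, Fintype.mem_piFinset]
      intro i
      by_cases h : ∃ j : ↥B, f j = i
      · obtain ⟨j, hj⟩ := h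
        rw [← hj, tset_range]
        simp [hfval j]
      · rw [tset_out f i h]
        simp only [Finset.mem_filter, Finset.mem_univ, true_and]
        intro b hb hcontra
        apply h
        refine ⟨⟨b, hb⟩, ?_⟩
        have : i ∈ (Finset.univ.filter fun i' => ω i' = some b) := by simp [hcontra]
        rw [hfspec ⟨b, hb⟩] at this
        exact (Finset.mem_singleton.mp this).symm
    · -- hj : second projection of sigma set is valid
      intro p hp
      obtain ⟨f, g⟩ := p
      simp only [Finset.mem_sigma, Finset.mem_univ, true_and, Fintype.mem_piFinset] at hp
      have hfilter : ∀ j : ↥B,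
          (Finset.univ.filter fun i => g i = some (j : Fin k)) = {f j} := by
        intro j
        ext i
        simp only [Finset.mem_filter, Finset.mem_univ, true_and, Finset.mem_singleton]
        constructor
        · intro hgi
          by_contra hne
          by_cases h : ∃ j' : ↥B, f j' = i
          · obtain ⟨j', hj'⟩ := h
            have := hp i
            rw [← hj', tset_range] at this
            simp only [Finset.mem_singleton] at this
            rw [hj'] at this
            rw [this] at hgi
            have : j' = j := Subtype.ext (Option.some_injective _ hgi)
            exact hne (by rw [← hj', this])
          · have := hp i
            rw [tset_out f i h] at this
            simp only [Finset.mem_filter, Finset.mem_univ, true_and] at this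
            exact this (j : Fin k) j.2 hgi
        · intro hi
          subst hi
          have := hp (f j)
          rw [tset_range] at this
          simpa using this
      simp only [Finset.mem_filter, Finset.mem_univ, true_and]
      rw [hvalid]
      intro j hj
      rw [hfilter ⟨j, hj⟩]
      simp
    · -- left_inv
      intro ω hω
      rfl
    · -- right_inv
      intro p hp
      obtain ⟨f, g⟩ := p
      simp only [Finset.mem_sigma, Finset.mem_univ, true_and, Fintype.mem_piFinset] at hp
      -- need: chosen embedding for g equals f
      have hg : B ⊆ singletonBins g := by
        rw [hvalid]
        intro j hj
        -- same filter computation as above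
        have hfilter : (Finset.univ.filter fun i => g i = some j) = {f ⟨j, hj⟩} := by
          ext i
          simp only [Finset.mem_filter, Finset.mem_univ, true_and, Finset.mem_singleton]
          constructor
          · intro hgi
            by_cases h : ∃ j' : ↥B, f j' = i
            · obtain ⟨j', hj'⟩ := h
              have := hp i
              rw [← hj', tset_range] at this
              simp only [Finset.mem_singleton] at this
              rw [hj'] at this
              rw [this] at hgi
              have hj'' : (j' : Fin k) = j := Option.some_injective _ hgi
              rw [← hj']
              congr 1
              exact Subtype.ext hj''
            · have := hp i
              rw [tset_out f i h] at this
              simp only [Finset.mem_filter, Finset.mem_univ, true_and] at this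
              exact absurd hgi (this j hj)
          · intro hi
            subst hi
            have := hp (f ⟨j, hj⟩)
            rw [tset_range] at this
            simpa using this
        rw [hfilter]
        simp
      -- mem_filter proof needed by the bij' machinery; show the sigma components agree
      have hfeq : ∀ (hg' : B ⊆ singletonBins g), (exF g hg').choose = f := by
        intro hg'
        have hspec := (exF g hg').choose_spec
        apply Function.Embedding.ext
        intro j
        have h1 := hspec j
        have hfilter : (Finset.univ.filter fun i => g i = some (j : Fin k)) = {f j} := by
          ext i
          simp only [Finset.mem_filter, Finset.mem_univ, true_and, Finset.mem_singleton]
          constructor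
          · intro hgi
            by_cases h : ∃ j' : ↥B, f j' = i
            · obtain ⟨j', hj'⟩ := h
              have := hp i
              rw [← hj', tset_range] at this
              simp only [Finset.mem_singleton] at this
              rw [hj'] at this
              rw [this] at hgi
              have : j' = j := Subtype.ext (Option.some_injective _ hgi)
              rw [← hj', this]
            · have := hp i
              rw [tset_out f i h] at this
              simp only [Finset.mem_filter, Finset.mem_univ, true_and] at this
              exact absurd hgi (this (j : Fin k) j.2)
          · intro hi
            subst hi
            have := hp (f j)
            rw [tset_range] at this
            simpa using this
        rw [hfilter] at h1
        exact Finset.singleton_injective h1.symm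
      exact Sigma.ext (hfeq hg) (heq_of_eq rfl)
    · intro ω hω
      rfl
  rw [key, Finset.sum_sigma]
  -- inner sum for a fixed f
  have inner : ∀ f : ↥B ↪ Fin n,
      (∑ g ∈ Fintype.piFinset (tset f), outcomeProb n k z g)
        = (z / k) ^ r * S ^ (n - r) := by
    intro f
    have hps := (Finset.prod_univ_sum (tset f) (fun _ v => ballWeight k z v)).symm
    rw [show (∑ g ∈ Fintype.piFinset (tset f), outcomeProb n k z g)
        = ∑ g ∈ Fintype.piFinset (tset f), ∏ i : Fin n, ballWeight k z (g i) from rfl, hps]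
    -- the "outside" factor value
    have hout : (∑ v ∈ (Finset.univ.filter fun v : Option (Fin k) => ∀ b ∈ B, v ≠ some b),
        ballWeight k z v) = S := by
      rw [Finset.sum_filter, Fintype.sum_option]
      have h1 : (if ∀ b ∈ B, (none : Option (Fin k)) ≠ some b then ballWeight k z none else 0)
          = 1 - z := by simp [ballWeight]
      rw [h1]
      have h2 : ∀ c : Fin k,
          (if ∀ b ∈ B, (some c : Option (Fin k)) ≠ some b then ballWeight k z (some c) else 0)
            = if c ∈ Bᶜ then z / k else 0 := by
        intro c
        by_cases hc : c ∈ B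
        · simp [hc, ballWeight]
        · have hcond : ∀ b ∈ B, (some c : Option (Fin k)) ≠ some b := by
            intro b hb hbc
            exact hc (by rw [Option.some_injective _ hbc]; exact hb)
          simp [hc, hcond, ballWeight]
      simp only [h2]
      rw [← Finset.sum_filter, Finset.filter_mem_eq_inter, Finset.univ_inter,
        Finset.sum_const, Finset.card_compl, hB]
      simp only [Fintype.card_fin, nsmul_eq_mul]
      rw [Nat.cast_sub hrk, hS]
      push_cast
      field_simp
      ring
    -- rewrite each factor as an if
    have hfac : ∀ i : Fin n, (∑ v ∈ tset f i, ballWeight k z v)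
        = if ∃ j : ↥B, f j = i then z / k else S := by
      intro i
      by_cases h : ∃ j : ↥B, f j = i
      · obtain ⟨j, hj⟩ := h
        rw [if_pos ⟨j, hj⟩, ← hj, tset_range]
        simp [ballWeight]
      · rw [if_neg h, tset_out f i h, hout]
    rw [Finset.prod_congr rfl (fun i _ => hfac i), Finset.prod_ite, Finset.prod_const,
      Finset.prod_const]
    have hc1 : (Finset.univ.filter fun i => ∃ j : ↥B, f j = i).card = r := by
      have : (Finset.univ.filter fun i => ∃ j : ↥B, f j = i) = Finset.univ.map f := by
        ext i
        simp [eq_comm]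
      rw [this, Finset.card_map, Finset.card_univ, Fintype.card_coe, hB]
    have hc2 : (Finset.univ.filter fun i => ¬ ∃ j : ↥B, f j = i).card = n - r := by
      have := Finset.card_filter_add_card_filter_not
        (s := (Finset.univ : Finset (Fin n))) (p := fun i => ∃ j : ↥B, f j = i)
      rw [hc1, Finset.card_univ, Fintype.card_fin] at this
      omega
    rw [hc1, hc2]
  rw [Finset.sum_congr rfl (fun f _ => inner f), Finset.sum_const, Finset.card_univ,
    Fintype.card_embedding_eq, Fintype.card_coe, Fintype.card_fin, hB,
    Nat.descFactorial_eq_factorial_mul_choose, nsmul_eq_mul]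
  push_cast
  ring
end

section
/- In the balls-and-bins model with n ≥ 1 balls, k ≥ 1 bins and parameter z ∈ [0,1], for every integer x with 0 ≤ x ≤ n, the probability that the number of singleton bins equals x is P_n(x) = Σ_{r=x}^{n} (−1)^{r−x} · C(r,x) · C(k,r) · C(n,r) · r! · (z/k)^r · (1 − r·z/k)^{n−r}. -/
/-!
Let `S` be the number of singleton bins. For `S ≤ n`, binomial inversion gives
`[S = x] = ∑_{r=x}^{n} (-1)^(r-x) C(r,x) C(S,r)`, so it suffices to compute the binomial moments
`E[C(S,r)] = ∑_{|T| = r} P(T ⊆ singletons)`. The bins of `T` are all singletons exactly when there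
is an injection `e : T ↪ balls` such that ball `e j` lands in `j` and no other ball lands in `T`;
`e` is then unique. For fixed `e` this event is a product of one-ball events, of probability
`(z/k)^r (1 - r z/k)^(n-r)`, and there are `n (n-1) ⋯ (n-r+1)` injections.
-/

open Finset Function

theorem sum_range_neg_one_pow_mul_choose_of_le {R : Type*} [CommRing R] {q m : ℕ}
    (h : q ≤ m) :
    ∑ t ∈ range (m + 1), (-1 : R) ^ t * q.choose t = if q = 0 then 1 else 0 := by
  rw [← sum_subset (range_subset_range.2 (Nat.succ_le_succ h)) fun t _ ht => by
    rw [Nat.choose_eq_zero_of_lt (by simpa using ht), Nat.cast_zero, mul_zero]]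
  exact_mod_cast congrArg (Int.cast : ℤ → R) (Int.alternating_sum_range_choose (n := q))

theorem sum_Icc_neg_one_pow_mul_choose_mul_choose {R : Type*} [CommRing R] {s n : ℕ}
    (x : ℕ) (hs : s ≤ n) :
    ∑ r ∈ Icc x n, (-1 : R) ^ (r - x) * r.choose x * s.choose r = if s = x then 1 else 0 := by
  have hfactor : ∀ r ∈ Icc x n, (-1 : R) ^ (r - x) * r.choose x * s.choose r
      = s.choose x * ((-1) ^ (r - x) * (s - x).choose (r - x)) := fun r hr => by
    have := Nat.choose_mul (n := s) (mem_Icc.1 hr).1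
    rw [mul_comm (s.choose x : R), mul_assoc, ← Nat.cast_mul, mul_comm (r.choose x), this]
    push_cast; ring
  rw [sum_congr rfl hfactor, ← mul_sum, ← Ico_add_one_right_eq_Icc, sum_Ico_eq_sum_range]
  rcases lt_or_ge s x with hsx | hxs
  · simp [Nat.choose_eq_zero_of_lt hsx, hsx.ne]
  · rw [show n + 1 - x = n - x + 1 by omega]
    simp only [Nat.add_sub_cancel_left]
    rw [sum_range_neg_one_pow_mul_choose_of_le (by omega)]
    rcases hxs.eq_or_lt with rfl | hlt
    · simp
    · simp [hlt.ne', show s - x ≠ 0 by omega]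

theorem card_singletonBins_le {n k : ℕ} (ω : Fin n → Option (Fin k)) :
    #(singletonBins ω) ≤ n := by
  classical
  calc #(singletonBins ω) ≤ #(univ.image ω) :=
        card_le_card_of_injOn some (fun j hj => by
          obtain ⟨i, hi⟩ := card_pos.1 (((mem_filter.1 hj).2).symm ▸ Nat.one_pos)
          exact mem_image.2 ⟨i, mem_univ i, (mem_filter.1 hi).2⟩) (Option.some_injective _).injOn
    _ ≤ n := card_image_le.trans (by simp)

theorem sum_prod_filter_comp_eq {ι β γ R : Type*} [Fintype ι] [DecidableEq ι]
    [Fintype β] [DecidableEq γ] [CommSemiring R] (w : β → R) (f : β → γ) (c : ι → γ) :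
    ∑ ω ∈ univ.filter (fun ω : ι → β => f ∘ ω = c), ∏ i, w (ω i)
      = ∏ i, ∑ b ∈ univ.filter (fun b => f b = c i), w b := by
  rw [prod_univ_sum]
  congr 1
  ext ω
  simp [Fintype.mem_piFinset, funext_iff]

def restrictBin {β : Type*} [DecidableEq β] (T : Finset β) (b : Option β) : Option T :=
  b.bind fun j => if h : j ∈ T then some ⟨j, h⟩ else none

theorem restrictBin_eq_some_iff {β : Type*} [DecidableEq β] {T : Finset β} {b : Option β} {j : T} :
    restrictBin T b = some j ↔ b = some j.1 := by
  rcases b with _ | b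
  · simp [restrictBin]
  · by_cases hb : b ∈ T
    · simp [restrictBin, hb, Subtype.ext_iff, eq_comm]
    · simp only [restrictBin, Option.bind_some, hb, dite_false, reduceCtorEq, false_iff,
        Option.some_inj]
      rintro rfl
      exact hb j.2

theorem Function.Embedding.partialInv_injective {α β : Type*} :
    Injective fun e : α ↪ β => partialInv e := by
  intro e e' h
  ext a
  have := partialInv_left e.injective a
  rw [show partialInv e = partialInv e' from h] at this
  exact ((e'.injective.isPartialInv _ _).1 this).symm

theorem card_filter_isSome_partialInv {α β : Type*} [Fintype α] [Fintype β] (e : α ↪ β) :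
    #(univ.filter fun b => (partialInv e b).isSome) = Fintype.card α := by
  classical
  rw [← card_univ, ← card_map e]
  congr 1
  ext b
  simp [Option.isSome_iff_exists, e.injective.isPartialInv _ _]

section ballWeight

variable {k : ℕ} (z : ℝ) (T : Finset (Fin k))

theorem sum_ballWeight (hk : k ≠ 0) : ∑ b, ballWeight k z b = 1 := by
  simp only [ballWeight, Fintype.sum_option, sum_const, card_univ, Fintype.card_fin, nsmul_eq_mul]
  field_simp
  ring

theorem sum_ballWeight_restrictBin_eq_some (j : T) :
    ∑ b ∈ univ.filter (fun b => restrictBin T b = some j), ballWeight k z b = z / k := by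
  rw [show univ.filter (fun b => restrictBin T b = some j) = {some j.1} by
    ext b; simp [restrictBin_eq_some_iff]]
  exact sum_singleton _ _

theorem sum_ballWeight_restrictBin_eq_none (hk : k ≠ 0) :
    ∑ b ∈ univ.filter (fun b => restrictBin T b = none), ballWeight k z b
      = 1 - #T * z / k := by
  have htotal := sum_fiberwise univ (restrictBin T) (ballWeight k z)
  rw [Fintype.sum_option, sum_ballWeight z hk] at htotal
  simp only [sum_ballWeight_restrictBin_eq_some, sum_const, card_univ, Fintype.card_coe,
    nsmul_eq_mul] at htotal
  rw [← htotal]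
  ring

theorem prod_sum_ballWeight_restrictBin_eq_partialInv {n : ℕ} (hk : k ≠ 0) (e : T ↪ Fin n) :
    ∏ i, ∑ b ∈ univ.filter (fun b => restrictBin T b = partialInv e i), ballWeight k z b
      = (z / k) ^ #T * (1 - #T * z / k) ^ (n - #T) := by
  have hcoord : ∀ i, ∑ b ∈ univ.filter (fun b => restrictBin T b = partialInv e i),
      ballWeight k z b = if (partialInv e i).isSome then z / k else 1 - #T * z / k := by
    intro i
    rcases partialInv e i with _ | j
    · simp [sum_ballWeight_restrictBin_eq_none z T hk]
    · simp [sum_ballWeight_restrictBin_eq_some]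
  have hcard := card_filter_add_card_filter_not (s := univ) fun i => (partialInv e i).isSome
  rw [card_filter_isSome_partialInv, card_univ, Fintype.card_fin, Fintype.card_coe] at hcard
  rw [prod_congr rfl fun i _ => hcoord i, prod_ite, prod_const, prod_const,
    card_filter_isSome_partialInv, Fintype.card_coe, show #(univ.filter fun i =>
      ¬(partialInv e i).isSome) = n - #T by omega]

end ballWeight

theorem subset_singletonBins_iff {n k : ℕ} (T : Finset (Fin k)) (ω : Fin n → Option (Fin k)) :
    T ⊆ singletonBins ω ↔ ∃ e : T ↪ Fin n, restrictBin T ∘ ω = partialInv e := by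
  have hmatch : ∀ e : T ↪ Fin n,
      restrictBin T ∘ ω = partialInv e ↔ ∀ i (j : T), ω i = some j.1 ↔ i = e j := by
    intro e
    rw [funext_iff]
    refine forall_congr' fun i => ?_
    rw [Option.ext_iff]
    refine forall_congr' fun j => ?_
    rw [comp_apply, restrictBin_eq_some_iff, e.injective.isPartialInv, @eq_comm _ (e j)]
  have hsingleton : ∀ (j : Fin k) (i : Fin n),
      univ.filter (fun i' => ω i' = some j) = {i} ↔ ∀ i', ω i' = some j ↔ i' = i := by
    simp [Finset.ext_iff]
  simp only [hmatch]
  constructor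
  · intro hT
    have : ∀ j : T, ∃ i, univ.filter (fun i' => ω i' = some j.1) = {i} := fun j =>
      card_eq_one.1 (mem_filter.1 (hT j.2)).2
    choose f hf using this
    have hf' : ∀ i (j : T), ω i = some j.1 ↔ i = f j := fun i j => (hsingleton j _).1 (hf j) i
    refine ⟨⟨f, fun j j' h => Subtype.ext ?_⟩, hf'⟩
    have hj := (hf' (f j) j).2 rfl
    rw [h, (hf' (f j') j').2 rfl, Option.some_inj] at hj
    exact hj.symm
  · rintro ⟨e, he⟩ j hj
    exact mem_filter.2 ⟨mem_univ j,
      card_eq_one.2 ⟨e ⟨j, hj⟩, (hsingleton j _).2 fun i => he i ⟨j, hj⟩⟩⟩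

theorem sum_outcomeProb_filter_subset_singletonBins {n k : ℕ} (hk : k ≠ 0) (z : ℝ)
    (T : Finset (Fin k)) :
    ∑ ω ∈ univ.filter (fun ω : Fin n → Option (Fin k) => T ⊆ singletonBins ω), outcomeProb n k z ω
      = n.descFactorial #T * ((z / k) ^ #T * (1 - #T * z / k) ^ (n - #T)) := by
  classical
  have hunion : univ.filter (fun ω : Fin n → Option (Fin k) => T ⊆ singletonBins ω)
      = univ.biUnion fun e : T ↪ Fin n => univ.filter (restrictBin T ∘ · = partialInv e) := by
    ext ω
    simp [subset_singletonBins_iff]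
  rw [hunion, sum_biUnion fun e _ e' _ hne => disjoint_filter.2 fun ω _ h h' =>
    hne (Embedding.partialInv_injective (h.symm.trans h'))]
  simp only [outcomeProb, sum_prod_filter_comp_eq,
    prod_sum_ballWeight_restrictBin_eq_partialInv z T hk, sum_const, card_univ,
    Fintype.card_embedding_eq, Fintype.card_fin, Fintype.card_coe, nsmul_eq_mul]

theorem sum_outcomeProb_mul_choose_card_singletonBins {n k : ℕ} (hk : k ≠ 0) (z : ℝ) (r : ℕ) :
    ∑ ω : Fin n → Option (Fin k), outcomeProb n k z ω * (#(singletonBins ω)).choose r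
      = k.choose r * n.descFactorial r * ((z / k) ^ r * (1 - r * z / k) ^ (n - r)) := by
  classical
  have hchoose : ∀ ω : Fin n → Option (Fin k), ((#(singletonBins ω)).choose r : ℝ)
      = ∑ T ∈ univ.powersetCard r, if T ⊆ singletonBins ω then 1 else 0 := by
    intro ω
    rw [sum_boole, ← card_powersetCard, powersetCard_eq_filter, powersetCard_eq_filter]
    congr 2
    ext T
    simp [and_comm]
  simp only [hchoose, mul_sum, mul_boole]
  rw [sum_comm, sum_congr rfl fun T hT => by
    rw [← sum_filter, sum_outcomeProb_filter_subset_singletonBins hk, (mem_powersetCard.1 hT).2],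
    sum_const, card_powersetCard, card_univ, Fintype.card_fin, nsmul_eq_mul, mul_assoc]

theorem stmt_3_general (n k x : ℕ) (z : ℝ) (hk : 1 ≤ k) :
    ∑ ω ∈ Finset.univ.filter
        (fun ω : Fin n → Option (Fin k) => (singletonBins ω).card = x),
        outcomeProb n k z ω
      = ∑ r ∈ Finset.Icc x n,
          (-1 : ℝ) ^ (r - x) * (r.choose x : ℝ) * (k.choose r : ℝ)
            * (n.choose r : ℝ) * (r.factorial : ℝ) * (z / k) ^ r
            * (1 - r * z / k) ^ (n - r) := by
  have hindicator : ∀ ω : Fin n → Option (Fin k), (if #(singletonBins ω) = x then 1 else 0)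
      = ∑ r ∈ Icc x n, (-1 : ℝ) ^ (r - x) * r.choose x * (#(singletonBins ω)).choose r := fun ω =>
    (sum_Icc_neg_one_pow_mul_choose_mul_choose x (card_singletonBins_le ω)).symm
  calc ∑ ω ∈ univ.filter (fun ω : Fin n → Option (Fin k) => #(singletonBins ω) = x),
        outcomeProb n k z ω
      = ∑ r ∈ Icc x n, (-1 : ℝ) ^ (r - x) * r.choose x
          * ∑ ω : Fin n → Option (Fin k), outcomeProb n k z ω * (#(singletonBins ω)).choose r := by
        simp only [sum_filter, ← mul_boole, hindicator, mul_sum]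
        rw [sum_comm]
        refine sum_congr rfl fun r _ => sum_congr rfl fun ω _ => by ring
    _ = _ := by
        refine sum_congr rfl fun r _ => ?_
        rw [sum_outcomeProb_mul_choose_card_singletonBins (by omega),
          Nat.descFactorial_eq_factorial_mul_choose]
        push_cast
        ring

/-- In the balls-and-bins model with `n ≥ 1` balls, `k ≥ 1` bins and `z ∈ [0,1]`,
for every `0 ≤ x ≤ n`, the probability that the number of singleton bins equals `x` is
`P_n(x) = Σ_{r=x}^{n} (−1)^{r−x}·C(r,x)·C(k,r)·C(n,r)·r!·(z/k)^r·(1 − r·z/k)^{n−r}`. -/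
theorem stmt_3 (n k x : ℕ) (z : ℝ) (hn : 1 ≤ n) (hk : 1 ≤ k)
    (hz0 : 0 ≤ z) (hz1 : z ≤ 1) (hx : x ≤ n) :
    ∑ ω ∈ Finset.univ.filter
        (fun ω : Fin n → Option (Fin k) => (singletonBins ω).card = x),
        outcomeProb n k z ω
      = ∑ r ∈ Finset.Icc x n,
          (-1 : ℝ) ^ (r - x) * (r.choose x : ℝ) * (k.choose r : ℝ)
            * (n.choose r : ℝ) * (r.factorial : ℝ) * (z / k) ^ r
            * (1 - r * z / k) ^ (n - r) :=
  stmt_3_general n k x z hk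
end

section
/- For all integers n ≥ 1 and k ≥ 1 and every real z ∈ [0,1], the following identity holds: Σ_{x=0}^{n} x · ( Σ_{r=x}^{n} (−1)^{r−x} · C(r,x) · C(k,r) · C(n,r) · r! · (z/k)^r · (1 − r·z/k)^{n−r} ) = z·n·(1 − z/k)^{n−1}. -/
open Finset

lemma alt (m : ℕ) : ∑ y ∈ range (m+1), (-1:ℝ)^(m-y) * (m.choose y : ℝ) = if m = 0 then 1 else 0 := by
  have h := add_pow (1:ℝ) (-1) m
  simp only [one_pow, one_mul, add_neg_cancel, zero_pow_eq] at h
  rw [← h]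

lemma key (r : ℕ) : ∑ x ∈ range (r+1), (x:ℝ) * ((-1:ℝ)^(r-x) * (r.choose x : ℝ)) = if r = 1 then 1 else 0 := by
  rcases r with _ | m
  · simp
  · rw [Finset.sum_range_succ']
    have key1 : ∀ y ∈ range (m+1), ((y+1 : ℕ):ℝ) * ((-1:ℝ)^(m+1-(y+1)) * (((m+1).choose (y+1)) : ℝ))
        = (m+1) * ((-1:ℝ)^(m-y) * (m.choose y : ℝ)) := by
      intro y hy
      have h2 : (((m+1).choose (y+1) : ℝ)) * (y+1) = (m+1) * (m.choose y : ℝ) := by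
        exact_mod_cast congrArg Nat.cast (Nat.add_one_mul_choose_eq m y).symm
      have h3 : m + 1 - (y+1) = m - y := by omega
      rw [h3]; push_cast
      linear_combination ((-1:ℝ)^(m-y)) * h2
    rw [Finset.sum_congr rfl key1, ← Finset.mul_sum, alt]
    rcases Nat.eq_zero_or_pos m with hm | hm
    · subst hm; norm_num
    · have h0 : m ≠ 0 := by omega
      have h1 : m + 1 ≠ 1 := by omega
      simp [h0, h1]

/-- For all `n ≥ 1`, `k ≥ 1` and `z ∈ [0,1]`:
`Σ_{x=0}^{n} x · ( Σ_{r=x}^{n} (−1)^{r−x}·C(r,x)·C(k,r)·C(n,r)·r!·(z/k)^r·(1 − r·z/k)^{n−r} )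
  = z·n·(1 − z/k)^{n−1}`. -/
theorem stmt_4 (n k : ℕ) (z : ℝ) (hn : 1 ≤ n) (hk : 1 ≤ k)
    (hz0 : 0 ≤ z) (hz1 : z ≤ 1) :
    ∑ x ∈ Finset.range (n + 1), (x : ℝ) *
        (∑ r ∈ Finset.Icc x n,
          (-1 : ℝ) ^ (r - x) * (r.choose x : ℝ) * (k.choose r : ℝ)
            * (n.choose r : ℝ) * (r.factorial : ℝ) * (z / k) ^ r
            * (1 - r * z / k) ^ (n - r))
      = z * n * (1 - z / k) ^ (n - 1) := by
  set K : ℕ → ℝ := fun r => (k.choose r : ℝ) * (n.choose r : ℝ) * (r.factorial : ℝ)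
      * (z / k) ^ r * (1 - r * z / k) ^ (n - r) with hK
  have step1 : ∀ x, ∑ r ∈ Finset.Icc x n,
          (-1 : ℝ) ^ (r - x) * (r.choose x : ℝ) * (k.choose r : ℝ)
            * (n.choose r : ℝ) * (r.factorial : ℝ) * (z / k) ^ r
            * (1 - r * z / k) ^ (n - r)
      = ∑ r ∈ Finset.range (n+1), if x ≤ r then (-1:ℝ)^(r-x) * (r.choose x : ℝ) * K r else 0 := by
    intro x
    rw [← Finset.sum_filter]
    apply Finset.sum_congr
    · ext r; simp [Finset.mem_Icc, Finset.mem_filter, Finset.mem_range]; omega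
    · intro r _; simp [hK]; ring
  simp_rw [step1, Finset.mul_sum]
  rw [Finset.sum_comm]
  have step2 : ∀ r ∈ Finset.range (n+1),
      (∑ x ∈ Finset.range (n+1), (x:ℝ) * (if x ≤ r then (-1:ℝ)^(r-x) * (r.choose x : ℝ) * K r else 0))
      = (if r = 1 then 1 else 0) * K r := by
    intro r hr
    rw [Finset.mem_range] at hr
    rw [← Finset.sum_filter_add_sum_filter_not _ (fun x => x ≤ r)]
    have hfil : (Finset.range (n+1)).filter (fun x => x ≤ r) = Finset.range (r+1) := by
      ext x; simp [Finset.mem_filter, Finset.mem_range]; omega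
    rw [hfil]
    have : ∑ x ∈ (Finset.range (n+1)).filter (fun x => ¬ x ≤ r),
        (x:ℝ) * (if x ≤ r then (-1:ℝ)^(r-x) * (r.choose x : ℝ) * K r else 0) = 0 := by
      apply Finset.sum_eq_zero; intro x hx
      rw [Finset.mem_filter] at hx
      simp [hx.2]
    rw [this, add_zero]
    have : ∑ x ∈ Finset.range (r+1),
        (x:ℝ) * (if x ≤ r then (-1:ℝ)^(r-x) * (r.choose x : ℝ) * K r else 0)
        = (∑ x ∈ Finset.range (r+1), (x:ℝ) * ((-1:ℝ)^(r-x) * (r.choose x : ℝ))) * K r := by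
      rw [Finset.sum_mul]
      apply Finset.sum_congr rfl
      intro x hx
      rw [Finset.mem_range] at hx
      have : x ≤ r := by omega
      simp [this]; ring
    rw [this, key]
  rw [Finset.sum_congr rfl step2]
  simp_rw [ite_mul, one_mul, zero_mul]
  rw [Finset.sum_ite_eq' (Finset.range (n+1)) 1 K]
  have h1 : (1:ℕ) ∈ Finset.range (n+1) := by simp; omega
  rw [if_pos h1]
  have hk0 : (k:ℝ) ≠ 0 := by positivity
  rw [hK]
  simp only [Nat.choose_one_right, Nat.factorial_one, Nat.cast_one, pow_one, one_mul, mul_one]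
  have hc : (k:ℝ) * n * (z/k) = z * n := by field_simp
  linear_combination (1 - z/k)^(n-1) * hc
end

section
/- For all reals q1 ∈ (0,1], q2 ∈ [0,1] and q3 ∈ [0,1], the denominator 4q1 − 2q1q2 + 2q1q3 − q1q2q3 is strictly positive, and 2 + (4 − 2q2 − 2q2q3 + 2q1q2q3)/(4q1 − 2q1q2 + 2q1q3 − q1q2q3) ≥ 8/3, with equality when q1 = 1 and q3 = 1 (for any q2 ∈ [0,1]). -/
/-- For `q1 ∈ (0,1]`, `q2, q3 ∈ [0,1]`: the denominator
`4q1 − 2q1q2 + 2q1q3 − q1q2q3` is strictly positive,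
`2 + (4 − 2q2 − 2q2q3 + 2q1q2q3)/(4q1 − 2q1q2 + 2q1q3 − q1q2q3) ≥ 8/3`,
with equality when `q1 = 1` and `q3 = 1` (for any `q2 ∈ [0,1]`). -/
theorem stmt_7 (q1 q2 q3 : ℝ) (hq1 : q1 ∈ Set.Ioc (0 : ℝ) 1)
    (hq2 : q2 ∈ Set.Icc (0 : ℝ) 1) (hq3 : q3 ∈ Set.Icc (0 : ℝ) 1) :
    0 < 4 * q1 - 2 * q1 * q2 + 2 * q1 * q3 - q1 * q2 * q3 ∧
    2 + (4 - 2 * q2 - 2 * q2 * q3 + 2 * q1 * q2 * q3)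
        / (4 * q1 - 2 * q1 * q2 + 2 * q1 * q3 - q1 * q2 * q3) ≥ 8 / 3 ∧
    (q1 = 1 → q3 = 1 →
      2 + (4 - 2 * q2 - 2 * q2 * q3 + 2 * q1 * q2 * q3)
          / (4 * q1 - 2 * q1 * q2 + 2 * q1 * q3 - q1 * q2 * q3) = 8 / 3) := by
  obtain ⟨h1, h1'⟩ := hq1
  obtain ⟨h2, h2'⟩ := hq2
  obtain ⟨h3, h3'⟩ := hq3
  have hD : 0 < 4 * q1 - 2 * q1 * q2 + 2 * q1 * q3 - q1 * q2 * q3 := by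
    nlinarith [mul_pos h1 (by nlinarith : (0:ℝ) < 4 - 2 * q2 + 2 * q3 - q2 * q3)]
  refine ⟨hD, ?_, ?_⟩
  · have h23 : (2:ℝ)/3 ≤ (4 - 2 * q2 - 2 * q2 * q3 + 2 * q1 * q2 * q3)
        / (4 * q1 - 2 * q1 * q2 + 2 * q1 * q3 - q1 * q2 * q3) := by
      rw [le_div_iff₀ hD]
      nlinarith [mul_nonneg (mul_nonneg (sub_nonneg.2 h1') (sub_nonneg.2 h2')) (sub_nonneg.2 h3'),
        mul_nonneg (sub_nonneg.2 h1') (sub_nonneg.2 h3'),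
        mul_nonneg h2 (sub_nonneg.2 h3'), mul_nonneg (sub_nonneg.2 h2') h3]
    linarith
  · intro e1 e3
    subst e1; subst e3
    have : (4 - 2 * q2 - 2 * q2 * 1 + 2 * 1 * q2 * 1)
        / (4 * 1 - 2 * 1 * q2 + 2 * 1 * 1 - 1 * q2 * 1) = 2/3 := by
      rw [div_eq_div_iff hD.ne' (by norm_num)]
      ring
    rw [this]; norm_num
end

section
/- For every integer n ≥ 5: 1 + (1 − (n−1)·(1/2)^{n−2})·(2^n/n) + ((n−1)·(1/2)^{n−2})·(2^{n−1}/(n−1)) = 2^n/n + 4/n − 1, and this quantity is strictly less than 2^n/n. -/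
/-- For every integer `n ≥ 5`:
`1 + (1 − (n−1)·(1/2)^(n−2))·(2^n/n) + ((n−1)·(1/2)^(n−2))·(2^(n−1)/(n−1))
  = 2^n/n + 4/n − 1`, and this quantity is strictly less than `2^n/n`. -/
theorem stmt_9 (n : ℕ) (hn : 5 ≤ n) :
    1 + (1 - ((n : ℝ) - 1) * (1 / 2) ^ (n - 2)) * (2 ^ n / n)
        + (((n : ℝ) - 1) * (1 / 2) ^ (n - 2)) * (2 ^ (n - 1) / ((n : ℝ) - 1))
      = 2 ^ n / n + 4 / n - 1 ∧
    2 ^ n / (n : ℝ) + 4 / n - 1 < 2 ^ n / n := by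
  obtain ⟨k, rfl⟩ : ∃ k, n = k + 5 := ⟨n - 5, by omega⟩
  have hn0 : ((k : ℝ) + 5) ≠ 0 := by positivity
  have hn1 : ((k : ℝ) + 5) - 1 ≠ 0 := by
    have : (0:ℝ) ≤ (k:ℝ) := Nat.cast_nonneg k
    nlinarith
  constructor
  · have e1 : k + 5 - 2 = k + 3 := by omega
    have e2 : k + 5 - 1 = k + 4 := by omega
    rw [e1, e2]
    push_cast
    have h2 : (2:ℝ) ^ (k + 5) = 2 ^ k * 32 := by ring
    have h4 : (2:ℝ) ^ (k + 4) = 2 ^ k * 16 := by ring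
    have h3 : ((1:ℝ)/2) ^ (k + 3) = 1 / (2 ^ k * 8) := by
      rw [div_pow, one_pow]; ring_nf
    have hp : (2:ℝ) ^ k ≠ 0 := by positivity
    rw [h2, h4, h3]
    field_simp
    ring
  · push_cast
    have : 4 / ((k:ℝ) + 5) < 1 := by
      rw [div_lt_one (by positivity)]
      have : (0:ℝ) ≤ (k:ℝ) := Nat.cast_nonneg k
      linarith
    linarith
end

section
/- Let k ≥ 2 and C be reals and let f : ℝ → ℝ be nondecreasing with f(x) ≤ C for every x ≤ 2 and f(x) ≤ 1 + f(x·(1 − 1/e)) for every x > 2 (where e is Euler's number). Then for every x ≥ 2, f(x) ≤ ⌈ln(x/2)/(1 − ln(e−1))⌉ + C. In particular, with C = (1 − 1/k)^{−1} this gives f(n) ≤ ⌈ln(n/2)/(1 − ln(e−1))⌉ + (1 − 1/k)^{−1}. -/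
open Real

/-- Recursion bound: if `f : ℝ → ℝ` is nondecreasing, `f x ≤ C` for `x ≤ 2` and
`f x ≤ 1 + f (x·(1 − 1/e))` for `x > 2`, then for every `x ≥ 2`,
`f x ≤ ⌈ln(x/2)/(1 − ln(e−1))⌉ + C`; in particular for `C = (1 − 1/k)⁻¹`
(with `k ≥ 2`) this gives `f x ≤ ⌈ln(x/2)/(1 − ln(e−1))⌉ + (1 − 1/k)⁻¹`. -/
theorem stmt_11 (k C : ℝ) (hk : 2 ≤ k) (f : ℝ → ℝ) (hmono : Monotone f)
    (hbase : ∀ x : ℝ, x ≤ 2 → f x ≤ C)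
    (hrec : ∀ x : ℝ, 2 < x → f x ≤ 1 + f (x * (1 - 1 / Real.exp 1))) :
    (∀ x : ℝ, 2 ≤ x →
      f x ≤ (⌈Real.log (x / 2) / (1 - Real.log (Real.exp 1 - 1))⌉ : ℝ) + C) ∧
    (C = (1 - 1 / k)⁻¹ → ∀ x : ℝ, 2 ≤ x →
      f x ≤ (⌈Real.log (x / 2) / (1 - Real.log (Real.exp 1 - 1))⌉ : ℝ)
        + (1 - 1 / k)⁻¹) := by
  set d : ℝ := 1 - Real.log (Real.exp 1 - 1) with hd_def
  have he1 : (0 : ℝ) < Real.exp 1 - 1 := by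
    have := Real.exp_one_gt_d9
    linarith
  have hd : 0 < d := by
    have : Real.log (Real.exp 1 - 1) < 1 := by
      calc Real.log (Real.exp 1 - 1) < Real.log (Real.exp 1) :=
            Real.log_lt_log he1 (by linarith)
        _ = 1 := Real.log_exp 1
    simpa [hd_def] using sub_pos.mpr this
  have hepos : (0 : ℝ) < Real.exp 1 := Real.exp_pos 1
  have hr : (0 : ℝ) < 1 - 1 / Real.exp 1 := by
    have h1 : 1 / Real.exp 1 < 1 := by
      rw [div_lt_one hepos]
      have := Real.exp_one_gt_d9; linarith
    linarith
  have hlogr : Real.log (1 - 1 / Real.exp 1) = -d := by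
    have heq : 1 - 1 / Real.exp 1 = (Real.exp 1 - 1) / Real.exp 1 := by
      field_simp
    rw [heq, Real.log_div (ne_of_gt he1) (ne_of_gt hepos), Real.log_exp]
    ring
  have key : ∀ n : ℕ, ∀ x : ℝ, 2 ≤ x → Real.log (x / 2) / d ≤ n → f x ≤ n + C := by
    intro n
    induction n with
    | zero =>
      intro x hx hle
      have hlog : Real.log (x / 2) ≤ 0 := by
        by_contra h
        push_neg at h
        have : 0 < Real.log (x / 2) / d := div_pos h hd
        simpa using lt_of_lt_of_le this hle
      have hx2 : x / 2 ≤ 1 := by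
        by_contra h
        push_neg at h
        have := Real.log_pos h
        linarith
      have : x ≤ 2 := by linarith
      simpa using hbase x this
    | succ n ih =>
      intro x hx hle
      rcases le_or_gt x 2 with h2 | h2
      · have := hbase x h2
        push_cast
        have hn : (0:ℝ) ≤ (n:ℝ) + 1 := by positivity
        linarith
      · have hstep := hrec x h2
        set y := x * (1 - 1 / Real.exp 1) with hy_def
        rcases le_or_gt y 2 with hy2 | hy2
        · have := hbase y hy2
          push_cast
          have hn : (0:ℝ) ≤ (n:ℝ) := by positivity
          linarith
        · have hxpos : (0:ℝ) < x := by linarith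
          have hlogy : Real.log (y / 2) = Real.log (x / 2) - d := by
            have : y / 2 = (x / 2) * (1 - 1 / Real.exp 1) := by
              rw [hy_def]; ring
            rw [this, Real.log_mul (by positivity) (ne_of_gt hr), hlogr]
            ring
          have hle' : Real.log (y / 2) / d ≤ n := by
            rw [hlogy, sub_div, div_self (ne_of_gt hd)]
            push_cast at hle
            linarith
          have := ih y (le_of_lt hy2) hle'
          push_cast
          push_cast at this
          linarith
  have main : ∀ x : ℝ, 2 ≤ x →
      f x ≤ (⌈Real.log (x / 2) / d⌉ : ℝ) + C := by
    intro x hx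
    have hlognn : 0 ≤ Real.log (x / 2) := by
      apply Real.log_nonneg
      linarith
    have hqnn : 0 ≤ Real.log (x / 2) / d := div_nonneg hlognn hd.le
    have hceil : (0:ℤ) ≤ ⌈Real.log (x / 2) / d⌉ := Int.ceil_nonneg hqnn
    set n : ℕ := (⌈Real.log (x / 2) / d⌉).toNat with hn_def
    have hcast : ((⌈Real.log (x / 2) / d⌉ : ℤ) : ℝ) = (n : ℝ) := by
      rw [hn_def]
      exact_mod_cast (Int.toNat_of_nonneg hceil).symm
    have hle : Real.log (x / 2) / d ≤ n := by
      rw [← hcast]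
      exact Int.le_ceil _
    have := key n x hx hle
    rw [hcast]
    exact this
  exact ⟨main, fun hC x hx => hC ▸ main x hx⟩
end
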